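/- arXiv:1812.07231 — 2 statements merged into one kernel-verified Lean document; each statement's English description precedes it below -/
import Mathlib

section
/- Let r ≥ 1, let m₁, …, m_r be nonnegative integers with parities ν_i ∈ {0,1}, ν_i ≡ m_i (mod 2), set M = m₁+⋯+m_r and N = ν₁+⋯+ν_r, let β > 0, and let s be a nonnegative integer with s + N even. Then ∫_{-∞}^{∞} x^{s} e^{-βx²} H_{m₁}(x) ⋯ H_{m_r}(x) dx = √π · β^{-(N+s+1)/2} · (-1)^{(M-N)/2} (∏_{i=1}^{r} m_i!) / (∏_{i=1}^{r} (1/2)_{(m_i+ν_i)/2}) · (1/2)_{(s+N)/2} · ∏_{i=1}^{r} C((m_i+ν_i−1)/2, (m_i−ν_i)/2) · F_A^{(r)}((s+N+1)/2; -(m₁−ν₁)/2, …, -(m_r−ν_r)/2; ν₁+1/2, …, ν_r+1/2; 1/β, …, 1/β). -/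
open MeasureTheory Finset Real

/-- Pochhammer symbol `(a)_k = a (a+1) ⋯ (a+k-1)`. -/
noncomputable def poch (a : ℝ) (k : ℕ) : ℝ := ∏ i ∈ Finset.range k, (a + i)

/-- Generalized binomial coefficient `C(a, j) = (a-j+1)_j / j!`. -/
noncomputable def gbinom (a : ℝ) (j : ℕ) : ℝ := poch (a - j + 1) j / (j.factorial : ℝ)

/-- Generalized Laguerre polynomial `L_n^{(α)}`. -/
noncomputable def Lag (α : ℝ) (n : ℕ) (x : ℝ) : ℝ :=
  ∑ i ∈ Finset.range (n + 1),
    ((-1 : ℝ) ^ i / (i.factorial : ℝ)) * gbinom ((n : ℝ) + α) (n - i) * x ^ i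

/-- Physicists' Hermite polynomial `H_n`. -/
noncomputable def Herm (n : ℕ) (x : ℝ) : ℝ :=
  ∑ k ∈ Finset.range (n / 2 + 1),
    ((-1 : ℝ) ^ k * (n.factorial : ℝ) / ((k.factorial : ℝ) * ((n - 2 * k).factorial : ℝ))) *
      (2 * x) ^ (n - 2 * k)

/-- Jacobi polynomial `P_n^{(α,γ)}`. -/
noncomputable def Jac (α γ : ℝ) (n : ℕ) (x : ℝ) : ℝ :=
  ∑ k ∈ Finset.range (n + 1),
    gbinom ((n : ℝ) + α) (n - k) * gbinom ((n : ℝ) + γ) k *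
      ((x - 1) / 2) ^ k * ((x + 1) / 2) ^ (n - k)

/-- Terminating Lauricella function of type A. -/
noncomputable def lauricellaA {r : ℕ} (a : ℝ) (m : Fin r → ℕ) (c x : Fin r → ℝ) : ℝ :=
  ∑ j ∈ Fintype.piFinset (fun i => Finset.range (m i + 1)),
    poch a (∑ i, j i) *
      ∏ i, (poch (-(m i : ℝ)) (j i) / (poch (c i) (j i) * ((j i).factorial : ℝ)) * x i ^ (j i))

/-- Terminating Gauss hypergeometric sum `₂F₁(-k, b; c; x)`. -/
noncomputable def hyp2F1 (k : ℕ) (b c x : ℝ) : ℝ :=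
  ∑ j ∈ Finset.range (k + 1),
    poch (-(k : ℝ)) j * poch b j / (poch c j * (j.factorial : ℝ)) * x ^ j

/-- Terminating hypergeometric sum `₃F₂(-k, b₁, b₂; c₁, c₂; x)`. -/
noncomputable def hyp3F2 (k : ℕ) (b₁ b₂ c₁ c₂ x : ℝ) : ℝ :=
  ∑ j ∈ Finset.range (k + 1),
    poch (-(k : ℝ)) j * poch b₁ j * poch b₂ j /
      (poch c₁ j * poch c₂ j * (j.factorial : ℝ)) * x ^ j

/-- Gauss hypergeometric series `₂F₁(a, b; c; x)` (a terminating series when `a` or `b`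
is a nonpositive integer). -/
noncomputable def hypSum (a b c x : ℝ) : ℝ :=
  ∑' j : ℕ, poch a j * poch b j / (poch c j * (j.factorial : ℝ)) * x ^ j

/-- Terminating Appell function `F₂(a; -m₁, -m₂; c₁, c₂; x₁, x₂)`. -/
noncomputable def appellF2 (a : ℝ) (m₁ m₂ : ℕ) (c₁ c₂ x₁ x₂ : ℝ) : ℝ :=
  ∑ j₁ ∈ Finset.range (m₁ + 1), ∑ j₂ ∈ Finset.range (m₂ + 1),
    poch a (j₁ + j₂) * poch (-(m₁ : ℝ)) j₁ * poch (-(m₂ : ℝ)) j₂ /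
      (poch c₁ j₁ * poch c₂ j₂ * (j₁.factorial : ℝ) * (j₂.factorial : ℝ)) * x₁ ^ j₁ * x₂ ^ j₂

/-- `1/z!` with the convention that it vanishes for negative integers `z`. -/
noncomputable def invFacZ (z : ℤ) : ℝ := if 0 ≤ z then ((z.toNat.factorial : ℕ) : ℝ)⁻¹ else 0

/-- Pochhammer symbol extended to integer index via `(a)_k = Γ(a+k)/Γ(a)` for negative `k`. -/
noncomputable def pochZ (a : ℝ) (k : ℤ) : ℝ :=
  if 0 ≤ k then poch a k.toNat else Real.Gamma (a + (k : ℝ)) / Real.Gamma a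

/-!
Write `m_i = 2 n_i + ν_i`. Reversing the order of summation in the explicit formula for `H_m`
gives `H_{2n+ν}(x) = (-1)^n 2^ν (2n+ν)!/n! · Σ_j (-n)_j / ((ν+1/2)_j j!) · x^(2j+ν)`, the
coefficients matching by the duplication formula `(2j+ν)! = 4^j (ν+1/2)_j j!`. Multiplying out
the product and integrating term by term, the monomial indexed by `j` contributes the Gaussian
moment `∫ x^(2k) e^(-βx²) = √π (1/2)_k β^(-k-1/2)` with `k = p + |j|`, `2p = s + N`; splitting
`(1/2)_(p+|j|) = (1/2)_p (p+1/2)_|j|` leaves exactly the Lauricella series in `1/β`.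
-/

lemma poch_succ (a : ℝ) (k : ℕ) : poch a (k + 1) = poch a k * (a + k) :=
  prod_range_succ _ _

lemma poch_pos {a : ℝ} (ha : 0 < a) (k : ℕ) : 0 < poch a k :=
  prod_pos fun _ _ => by positivity

lemma poch_add (a : ℝ) (p q : ℕ) : poch a (p + q) = poch a p * poch (a + p) q := by
  rw [poch, prod_range_add]
  congr 1
  exact prod_congr rfl fun i _ => by push_cast; ring

lemma poch_neg_natCast {n j : ℕ} (h : j ≤ n) :
    poch (-(n : ℝ)) j = (-1) ^ j * n.factorial / (n - j).factorial := by
  induction j with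
  | zero => simp [poch, Nat.factorial_ne_zero]
  | succ j ih =>
    obtain ⟨k, rfl⟩ : ∃ k, n = k + (j + 1) := ⟨n - (j + 1), by omega⟩
    rw [poch_succ, ih (by omega), show k + (j + 1) - j = k + 1 by omega, Nat.add_sub_cancel,
      Nat.factorial_succ]
    have : (k.factorial : ℝ) ≠ 0 := Nat.cast_ne_zero.2 (Nat.factorial_ne_zero k)
    push_cast
    field_simp
    ring

lemma poch_one_half_mul_two_pow {ν : ℕ} (hν : ν ≤ 1) : poch (1 / 2) ν * 2 ^ ν = 1 := by
  interval_cases ν <;> norm_num [poch]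

lemma Real.Gamma_natCast_add_half (n : ℕ) : Gamma (n + 1 / 2) = √π * poch (1 / 2) n := by
  induction n with
  | zero => simpa [poch] using Gamma_one_half_eq
  | succ n ih =>
    rw [Nat.cast_add_one, add_right_comm, Gamma_add_one (by positivity), ih, poch_succ]
    ring

lemma factorial_two_mul_add {ν : ℕ} (hν : ν ≤ 1) (j : ℕ) :
    ((2 * j + ν).factorial : ℝ) = 4 ^ j * poch (ν + 1 / 2) j * j.factorial := by
  induction j with
  | zero => simpa [poch, Nat.factorial_eq_one]
  | succ j ih =>
    rw [show 2 * (j + 1) + ν = 2 * j + ν + 1 + 1 by ring, Nat.factorial_succ,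
      Nat.factorial_succ, poch_succ, Nat.factorial_succ]
    push_cast
    rw [ih]
    interval_cases ν <;> push_cast <;> ring

lemma integral_pow_two_mul_mul_exp_neg_mul_sq {b : ℝ} (hb : 0 < b) (n : ℕ) :
    ∫ x : ℝ, x ^ (2 * n) * exp (-b * x ^ 2) =
      √π * poch (1 / 2) n * b ^ (-(n + 1 / 2 : ℝ)) := by
  set f : ℝ → ℝ := fun y => y ^ ((2 * n : ℕ) : ℝ) * exp (-b * y ^ (2 : ℝ))
  have hq : (-1 : ℝ) < ((2 * n : ℕ) : ℝ) := by
    linarith [(Nat.cast_nonneg (2 * n) : (0 : ℝ) ≤ _)]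
  calc ∫ x : ℝ, x ^ (2 * n) * exp (-b * x ^ 2)
      = ∫ x : ℝ, f |x| := by
        congr 1 with x
        simp only [f, rpow_natCast, rpow_two, pow_mul, sq_abs]
    _ = 2 * ∫ x in Set.Ioi 0, f x := integral_comp_abs
    _ = √π * poch (1 / 2) n * b ^ (-(n + 1 / 2 : ℝ)) := by
        rw [integral_rpow_mul_exp_neg_mul_rpow two_pos hq hb,
          show (((2 * n : ℕ) : ℝ) + 1) / 2 = n + 1 / 2 by push_cast; ring,
          show -(((2 * n : ℕ) : ℝ) + 1) / 2 = -(n + 1 / 2) by push_cast; ring,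
          Gamma_natCast_add_half]
        ring

lemma Herm_two_mul_add {ν : ℕ} (hν : ν ≤ 1) (n : ℕ) (x : ℝ) :
    Herm (2 * n + ν) x = (-1) ^ n * 2 ^ ν * (2 * n + ν).factorial / n.factorial *
      ∑ j ∈ range (n + 1),
        poch (-(n : ℝ)) j / (poch (ν + 1 / 2) j * j.factorial) * x ^ (2 * j + ν) := by
  rw [Herm, show (2 * n + ν) / 2 = n by omega, ← sum_range_reflect, mul_sum]
  refine sum_congr rfl fun j hj => ?_
  have hjn : j ≤ n := Nat.lt_succ_iff.1 (mem_range.1 hj)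
  obtain ⟨k, rfl⟩ : ∃ k, n = j + k := ⟨n - j, by omega⟩
  have hsign : (-1 : ℝ) ^ k = (-1) ^ (j + k) * (-1) ^ j := by
    rw [pow_add, mul_right_comm, ← mul_pow]; simp
  rw [show j + k + 1 - 1 - j = k by omega, show 2 * (j + k) + ν - 2 * k = 2 * j + ν by omega,
    poch_neg_natCast hjn, show j + k - j = k by omega, factorial_two_mul_add hν j, mul_pow,
    pow_add 2, pow_mul, hsign]
  have : (0 : ℝ) < poch (ν + 1 / 2) j := poch_pos (by positivity) j
  field_simp
  ring

lemma integrable_pow_mul_exp_neg_mul_sq {b : ℝ} (hb : 0 < b) (n : ℕ) :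
    Integrable fun x : ℝ => x ^ n * exp (-b * x ^ 2) := by
  simpa [rpow_natCast] using
    integrable_rpow_mul_exp_neg_mul_sq hb (s := n) (by linarith [(n.cast_nonneg : (0 : ℝ) ≤ n)])

lemma integral_pow_mul_exp_neg_mul_sq_mul_prod_sum {ι κ : Type*} [Fintype ι] [DecidableEq ι]
    {b : ℝ} (hb : 0 < b) (s : ℕ) (S : ι → Finset κ) (c : ι → κ → ℝ) (e : ι → κ → ℕ) :
    ∫ x : ℝ, x ^ s * exp (-b * x ^ 2) * ∏ i, ∑ j ∈ S i, c i j * x ^ e i j =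
      ∑ j ∈ Fintype.piFinset S,
        (∏ i, c i (j i)) * ∫ x : ℝ, x ^ (s + ∑ i, e i (j i)) * exp (-b * x ^ 2) := by
  have hexpand :
      (fun x : ℝ => x ^ s * exp (-b * x ^ 2) * ∏ i, ∑ j ∈ S i, c i j * x ^ e i j) =
        fun x => ∑ j ∈ Fintype.piFinset S,
          (∏ i, c i (j i)) * (x ^ (s + ∑ i, e i (j i)) * exp (-b * x ^ 2)) := by
    funext x
    rw [prod_univ_sum, mul_sum]
    refine sum_congr rfl fun j _ => ?_
    rw [prod_mul_distrib, prod_pow_eq_pow_sum, pow_add]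
    ring
  rw [hexpand,
    integral_finsetSum _ fun j _ => (integrable_pow_mul_exp_neg_mul_sq hb _).const_mul _]
  exact sum_congr rfl fun j _ => integral_const_mul _ _

theorem integral_pow_mul_exp_neg_mul_sq_mul_prod_Herm {r : ℕ} (n ν : Fin r → ℕ)
    (hν : ∀ i, ν i ≤ 1) {β : ℝ} (hβ : 0 < β) (s p : ℕ) (hp : s + ∑ i, ν i = 2 * p) :
    ∫ x : ℝ, x ^ s * exp (-β * x ^ 2) * ∏ i, Herm (2 * n i + ν i) x =
      √π * β ^ (-(p + 1 / 2 : ℝ)) * poch (1 / 2) p *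
        (∏ i, (-1) ^ n i * 2 ^ ν i * ((2 * n i + ν i).factorial : ℝ) / (n i).factorial) *
        lauricellaA (p + 1 / 2) n (fun i => ν i + 1 / 2) (fun _ => 1 / β) := by
  set A := ∏ i, (-1) ^ n i * 2 ^ ν i * ((2 * n i + ν i).factorial : ℝ) / (n i).factorial
  have hprod : (fun x : ℝ => x ^ s * exp (-β * x ^ 2) * ∏ i, Herm (2 * n i + ν i) x) =
      fun x => A * (x ^ s * exp (-β * x ^ 2) * ∏ i, ∑ j ∈ range (n i + 1),
        poch (-(n i : ℝ)) j / (poch (ν i + 1 / 2) j * j.factorial) * x ^ (2 * j + ν i)) := by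
    funext x
    simp_rw [Herm_two_mul_add (hν _), prod_mul_distrib]
    ring
  have hmoment (j : Fin r → ℕ) :
      ∫ x : ℝ, x ^ (s + ∑ i, (2 * j i + ν i)) * exp (-β * x ^ 2) =
        √π * β ^ (-(p + 1 / 2 : ℝ)) * poch (1 / 2) p *
          (poch (p + 1 / 2) (∑ i, j i) * (1 / β) ^ ∑ i, j i) := by
    have hexp : s + ∑ i, (2 * j i + ν i) = 2 * (p + ∑ i, j i) := by
      rw [sum_add_distrib, ← mul_sum]; omega
    have hβpow : β ^ (-((p + ∑ i, j i : ℕ) + 1 / 2 : ℝ)) =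
        β ^ (-(p + 1 / 2 : ℝ)) * (1 / β) ^ ∑ i, j i := by
      rw [one_div β, inv_pow, ← rpow_natCast, ← rpow_neg hβ.le, ← rpow_add hβ]
      congr 1
      push_cast
      ring
    rw [hexp, integral_pow_two_mul_mul_exp_neg_mul_sq hβ, poch_add, add_comm (1 / 2 : ℝ),
      hβpow]
    ring
  rw [hprod, integral_const_mul, integral_pow_mul_exp_neg_mul_sq_mul_prod_sum hβ, lauricellaA,
    mul_sum, mul_sum]
  refine sum_congr rfl fun j _ => ?_
  rw [hmoment, prod_mul_distrib, prod_pow_eq_pow_sum]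
  ring

lemma gbinom_two_mul_add_div_poch_one_half {ν : ℕ} (hν : ν ≤ 1) (n : ℕ) :
    gbinom ((((2 * n + ν : ℕ) : ℝ) + ν - 1) / 2) n / poch (1 / 2) (n + ν) =
      2 ^ ν / n.factorial := by
  have hpoch : poch (1 / 2) (n + ν) = poch (1 / 2) ν * poch (ν + 1 / 2) n := by
    rw [add_comm n, poch_add, add_comm (1 / 2 : ℝ)]
  have h2 : poch (1 / 2) ν = (2 ^ ν)⁻¹ :=
    eq_inv_of_mul_eq_one_left (poch_one_half_mul_two_pow hν)
  have hP : (0 : ℝ) < poch (ν + 1 / 2) n := poch_pos (by positivity) n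
  rw [gbinom, hpoch, h2,
    show (((2 * n + ν : ℕ) : ℝ) + ν - 1) / 2 - n + 1 = ν + 1 / 2 by push_cast; ring,
    div_div, div_eq_div_iff (by positivity) (by positivity)]
  field_simp

theorem hermite_krein_r_functional_general (r : ℕ) (m ν : Fin r → ℕ)
    (hν : ∀ i, ν i = m i % 2) (β : ℝ) (hβ : 0 < β) (s : ℕ)
    (hpar : Even (s + ∑ i, ν i)) :
    ∫ x : ℝ, x ^ s * Real.exp (-β * x ^ 2) * ∏ i, Herm (m i) x =
      Real.sqrt π * β ^ (-(((∑ i, ν i : ℕ) : ℝ) + (s : ℝ) + 1) / 2) *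
        ((-1 : ℝ) ^ (((∑ i, m i) - ∑ i, ν i) / 2) *
          (∏ i, ((m i).factorial : ℝ)) / ∏ i, poch (1 / 2) ((m i + ν i) / 2)) *
        poch (1 / 2) ((s + ∑ i, ν i) / 2) *
        (∏ i, gbinom (((m i : ℝ) + (ν i : ℝ) - 1) / 2) ((m i - ν i) / 2)) *
        lauricellaA ((((s + ∑ i, ν i : ℕ) : ℝ) + 1) / 2) (fun i => (m i - ν i) / 2)
          (fun i => (ν i : ℝ) + 1 / 2) (fun _ => 1 / β) := by
  have hν₁ (i : Fin r) : ν i ≤ 1 := by have := hν i; omega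
  obtain ⟨n, rfl⟩ : ∃ n : Fin r → ℕ, m = fun i => 2 * n i + ν i :=
    ⟨fun i => m i / 2, funext fun i => by
      show m i = 2 * (m i / 2) + ν i; have := hν i; omega⟩
  obtain ⟨p, hp⟩ := hpar
  have hsum : (∑ i, (2 * n i + ν i) - ∑ i, ν i) / 2 = ∑ i, n i := by
    rw [sum_add_distrib, ← mul_sum]; omega
  have hhalf : (((s + ∑ i, ν i : ℕ) : ℝ) + 1) / 2 = p + 1 / 2 := by rw [hp]; push_cast; ring
  have hexp : -(((∑ i, ν i : ℕ) : ℝ) + s + 1) / 2 = -(p + 1 / 2) := by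
    rw [← hhalf]; push_cast; ring
  have hA : (∏ i, (-1) ^ n i * 2 ^ ν i * ((2 * n i + ν i).factorial : ℝ) / (n i).factorial) =
      (-1) ^ (∑ i, n i) * (∏ i, ((2 * n i + ν i).factorial : ℝ)) /
          (∏ i, poch (1 / 2) (n i + ν i)) *
        ∏ i, gbinom ((((2 * n i + ν i : ℕ) : ℝ) + ν i - 1) / 2) (n i) := by
    rw [← prod_pow_eq_pow_sum, ← prod_mul_distrib, ← prod_div_distrib, ← prod_mul_distrib]
    refine prod_congr rfl fun i _ => ?_
    rw [div_mul_eq_mul_div, mul_div_assoc _ (gbinom _ _),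
      gbinom_two_mul_add_div_poch_one_half (hν₁ i)]
    ring
  have hhalf_add (i : Fin r) : (2 * n i + ν i + ν i) / 2 = n i + ν i := by
    have := hν₁ i; omega
  have hhalf_sub (i : Fin r) : (2 * n i + ν i - ν i) / 2 = n i := by omega
  simp only [hsum, hhalf_add, hhalf_sub, show (s + ∑ i, ν i) / 2 = p by omega, hhalf, hexp]
  rw [integral_pow_mul_exp_neg_mul_sq_mul_prod_Herm n ν hν₁ hβ s p (by omega), hA]
  ring

/-- generalized Krein-like functional of Hermite polynomials. -/
theorem hermite_krein_r_functional (r : ℕ) (hr : 1 ≤ r) (m ν : Fin r → ℕ)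
    (hν : ∀ i, ν i = m i % 2) (β : ℝ) (hβ : 0 < β) (s : ℕ)
    (hpar : Even (s + ∑ i, ν i)) :
    ∫ x : ℝ, x ^ s * Real.exp (-β * x ^ 2) * ∏ i, Herm (m i) x =
      Real.sqrt π * β ^ (-(((∑ i, ν i : ℕ) : ℝ) + (s : ℝ) + 1) / 2) *
        ((-1 : ℝ) ^ (((∑ i, m i) - ∑ i, ν i) / 2) *
          (∏ i, ((m i).factorial : ℝ)) / ∏ i, poch (1 / 2) ((m i + ν i) / 2)) *
        poch (1 / 2) ((s + ∑ i, ν i) / 2) *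
        (∏ i, gbinom (((m i : ℝ) + (ν i : ℝ) - 1) / 2) ((m i - ν i) / 2)) *
        lauricellaA ((((s + ∑ i, ν i : ℕ) : ℝ) + 1) / 2) (fun i => (m i - ν i) / 2)
          (fun i => (ν i : ℝ) + 1 / 2) (fun _ => 1 / β) :=
  hermite_krein_r_functional_general r m ν hν β hβ s hpar
end

section
/- Let n be a nonnegative integer and let s be a nonnegative integer. If s is even, then the power moment of the Hermite Rakhmanov density satisfies ∫_{-∞}^{∞} x^{s} e^{-x²} [H_n(x)]² dx = 2^{2n} Σ_{k=0}^{n} C(n,k)² k! 2^{-k} Γ(1/2 − k + n + s/2) · ₂F₁(k − n, 1/2 + k − n; 1/2 + k − n − s/2; 1). If s is odd, then ∫_{-∞}^{∞} x^{s} e^{-x²} [H_n(x)]² dx = 0. -/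
open MeasureTheory Finset Real

/-!
The linearization formula `H_m H_n = ∑ₖ 2ᵏ k! C(m,k) C(n,k) H_{m+n-2k}`, proved by induction on `m`
from the three-term recurrence, reduces the even moment of `H_n²` to the moments
`∫ x^{2t} e^{-x²} H_{2m}`. Expanding `H_{2m}` in powers of `2x` turns such a moment into a sum of
Gaussian moments `Γ(t + m - j + 1/2)`, which matches `4^m Γ(t + m + 1/2) ₂F₁(-m, 1/2 - m; 1/2 - m - t; 1)`
term by term: `4^j (-m)_j (1/2 - m)_j = (-2m)_{2j}` is a descending factorial, and
`Γ(a + j) = (-1)^j (1 - a - j)_j Γ(a)`. Odd moments vanish because the integrand is odd.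
-/

lemma poch_eq_eval_ascPochhammer (a : ℝ) (k : ℕ) : poch a k = (ascPochhammer ℝ k).eval a := by
  induction k with
  | zero => simp [poch]
  | succ k ih => rw [poch, prod_range_succ, ← poch, ih, ascPochhammer_succ_eval]

lemma poch_neg_natCast_s13 (N k : ℕ) : poch (-N) k = (-1) ^ k * N.descFactorial k := by
  rw [poch_eq_eval_ascPochhammer, ascPochhammer_eval_neg_eq_descPochhammer,
    descPochhammer_eval_eq_descFactorial]

lemma poch_one_sub_sub (a : ℝ) (j : ℕ) : poch (1 - a - j) j = (-1) ^ j * poch a j := by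
  rw [poch_eq_eval_ascPochhammer, poch_eq_eval_ascPochhammer,
    show 1 - a - j = -(a + j - 1) by ring, ascPochhammer_eval_neg_eq_descPochhammer,
    descPochhammer_eval_eq_ascPochhammer]
  ring_nf

lemma poch_two_mul (a : ℝ) (j : ℕ) :
    poch a (2 * j) = 4 ^ j * poch (a / 2) j * poch ((a + 1) / 2) j := by
  induction j with
  | zero => simp [poch]
  | succ j ih =>
    rw [show 2 * (j + 1) = 2 * j + 1 + 1 by ring, poch_succ, poch_succ, ih, poch_succ, poch_succ]
    push_cast
    ring

lemma Gamma_add_natCast_eq_poch_mul (a : ℝ) (ha : 0 < a) (k : ℕ) :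
    Gamma (a + k) = poch a k * Gamma a := by
  induction k with
  | zero => simp [poch]
  | succ k ih =>
    rw [Nat.cast_succ, ← add_assoc, Gamma_add_one (by positivity), ih, poch_succ]
    ring

/-- The coefficient of `(2x)^(n-2k)` in `H_n`: writing `n!/(n-2k)!` as a descending factorial
makes it vanish for `2k > n`, so the sum defining `H_n` may run over any long enough range. -/
noncomputable def hermCoeff (n k : ℕ) : ℝ := (-1) ^ k * n.descFactorial (2 * k) / k.factorial

lemma hermCoeff_eq_zero {n k : ℕ} (h : n < 2 * k) : hermCoeff n k = 0 := by
  simp [hermCoeff, Nat.descFactorial_eq_zero_iff_lt.2 h]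

lemma hermCoeff_zero (n : ℕ) : hermCoeff n 0 = 1 := by
  simp [hermCoeff]

lemma herm_eq_sum_hermCoeff {n N : ℕ} (hN : n / 2 < N) (x : ℝ) :
    Herm n x = ∑ k ∈ range N, hermCoeff n k * (2 * x) ^ (n - 2 * k) := by
  have hsub : range (n / 2 + 1) ⊆ range N := range_subset_range.2 hN
  rw [Herm, ← sum_subset hsub fun k _ hk => by
    rw [hermCoeff_eq_zero (by simp at hk; omega), zero_mul]]
  refine sum_congr rfl fun k hk => ?_
  have h2k : 2 * k ≤ n := by simp at hk; omega
  rw [hermCoeff, ← Nat.factorial_mul_descFactorial h2k]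
  push_cast
  field_simp

lemma hermCoeff_add_two_succ (n k : ℕ) :
    hermCoeff (n + 2) (k + 1) = hermCoeff (n + 1) (k + 1) - 2 * (n + 1) * hermCoeff n k := by
  have key : (n + 2).descFactorial (2 * k + 2)
      = (n + 1).descFactorial (2 * k + 2) + 2 * (k + 1) * (n + 1) * n.descFactorial (2 * k) := by
    rw [Nat.succ_descFactorial_succ, Nat.succ_descFactorial_succ, Nat.succ_descFactorial_succ,
      Nat.descFactorial_succ]
    rcases le_or_gt (2 * k) n with h | h
    · obtain ⟨d, rfl⟩ := Nat.exists_eq_add_of_le h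
      rw [Nat.add_sub_cancel_left]
      ring
    · simp [Nat.descFactorial_eq_zero_iff_lt.2 h]
  simp only [hermCoeff, show 2 * (k + 1) = 2 * k + 2 by ring, key, Nat.factorial_succ]
  push_cast
  field_simp
  ring

lemma herm_add_two (n : ℕ) (x : ℝ) :
    Herm (n + 2) x = 2 * x * Herm (n + 1) x - 2 * (n + 1) * Herm n x := by
  have hpow (k : ℕ) : hermCoeff (n + 1) (k + 1) * (2 * x * (2 * x) ^ (n + 1 - 2 * (k + 1)))
      = hermCoeff (n + 1) (k + 1) * (2 * x) ^ (n - 2 * k) := by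
    rcases le_or_gt (2 * (k + 1)) (n + 1) with h | h
    · rw [← pow_succ']
      congr 2
      omega
    · rw [hermCoeff_eq_zero h, zero_mul, zero_mul]
  rw [herm_eq_sum_hermCoeff (N := n / 2 + 1 + 1) (by omega),
    herm_eq_sum_hermCoeff (N := n / 2 + 1 + 1) (by omega),
    herm_eq_sum_hermCoeff (N := n / 2 + 1) (by omega),
    sum_range_succ' (fun k => hermCoeff (n + 2) k * (2 * x) ^ (n + 2 - 2 * k)),
    sum_range_succ' (fun k => hermCoeff (n + 1) k * (2 * x) ^ (n + 1 - 2 * k)), mul_add, mul_sum]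
  simp only [mul_left_comm (2 * x) (hermCoeff (n + 1) _), hpow, hermCoeff_add_two_succ,
    hermCoeff_zero, sub_mul, sum_sub_distrib, mul_sum, Nat.mul_zero, Nat.sub_zero,
    show ∀ k, n + 2 - 2 * (k + 1) = n - 2 * k by omega]
  simp only [mul_assoc]
  ring

lemma herm_zero (x : ℝ) : Herm 0 x = 1 := by simp [Herm]

lemma herm_one (x : ℝ) : Herm 1 x = 2 * x := by simp [Herm]

lemma two_mul_mul_herm (r : ℕ) (x : ℝ) :
    2 * x * Herm r x = Herm (r + 1) x + 2 * r * Herm (r - 1) x := by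
  cases r with
  | zero => simp [herm_zero, herm_one]
  | succ r =>
    rw [herm_add_two, Nat.add_sub_cancel]
    push_cast
    ring

lemma herm_neg (n : ℕ) (x : ℝ) : Herm n (-x) = (-1) ^ n * Herm n x := by
  rw [Herm, Herm, mul_sum]
  refine sum_congr rfl fun k hk => ?_
  have h2k : 2 * k ≤ n := by simp at hk; omega
  obtain ⟨d, rfl⟩ := Nat.exists_eq_add_of_le h2k
  rw [Nat.add_sub_cancel_left, show 2 * -x = -(2 * x) by ring, neg_pow (2 * x), pow_add, pow_mul,
    neg_one_sq, one_pow]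
  ring

noncomputable def linCoeff (m n k : ℕ) : ℝ := 2 ^ k * k.factorial * m.choose k * n.choose k

lemma linCoeff_eq_zero {m n k : ℕ} (h : m < k) : linCoeff m n k = 0 := by
  simp [linCoeff, Nat.choose_eq_zero_of_lt h]

lemma linCoeff_zero (m n : ℕ) : linCoeff m n 0 = 1 := by simp [linCoeff]

lemma cast_choose_succ_right_eq (n k : ℕ) :
    (n.choose (k + 1) : ℝ) * (k + 1) = n.choose k * (n - k) := by
  rcases le_or_gt k n with h | h
  · have := congrArg (Nat.cast (R := ℝ)) (Nat.choose_succ_right_eq n k)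
    push_cast [Nat.cast_sub h] at this
    exact this
  · simp [Nat.choose_eq_zero_of_lt h, Nat.choose_eq_zero_of_lt (Nat.lt_succ_of_lt h)]

lemma cast_choose_mul_succ_eq (n k : ℕ) :
    (n.choose k : ℝ) * (n + 1) = (n + 1).choose k * (n + 1 - k) := by
  rcases le_or_gt k (n + 1) with h | h
  · have := congrArg (Nat.cast (R := ℝ)) (Nat.choose_mul_succ_eq n k)
    push_cast [Nat.cast_sub h] at this
    exact this
  · simp [Nat.choose_eq_zero_of_lt h, Nat.choose_eq_zero_of_lt (Nat.lt_of_succ_lt h)]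

lemma linCoeff_add_two_succ (m n k : ℕ) :
    linCoeff (m + 2) n (k + 1) = linCoeff (m + 1) n (k + 1)
      + 2 * (m + n + 1 - 2 * k) * linCoeff (m + 1) n k - 2 * (m + 1) * linCoeff m n k := by
  have h₁ := cast_choose_succ_right_eq n k
  have h₂ := cast_choose_mul_succ_eq m k
  have h₃ : ((m + 2).choose (k + 1) : ℝ) = (m + 1).choose (k + 1) + (m + 1).choose k := by
    exact_mod_cast (Nat.choose_succ_succ' (m + 1) k).trans (add_comm _ _)
  simp only [linCoeff, Nat.factorial_succ]
  push_cast
  linear_combination (2 : ℝ) ^ (k + 1) * k.factorial *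
    ((k + 1) * n.choose (k + 1) * h₃ + (m + 1).choose k * h₁ + n.choose k * h₂)

lemma sum_range_linCoeff_mul_herm_of_lt {m N : ℕ} (hN : m < N) (n : ℕ) (x : ℝ) :
    ∑ k ∈ range N, linCoeff m n k * Herm (m + n - 2 * k) x
      = ∑ k ∈ range (m + 1), linCoeff m n k * Herm (m + n - 2 * k) x :=
  (sum_subset (range_subset_range.2 hN) fun k _ hk => by
    rw [linCoeff_eq_zero (by simp at hk; omega), zero_mul]).symm

lemma linCoeff_mul_two_mul_herm (m n k : ℕ) (x : ℝ) :
    linCoeff (m + 1) n k * (2 * x * Herm (m + 1 + n - 2 * k) x)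
      = linCoeff (m + 1) n k * Herm (m + n + 2 - 2 * k) x
        + 2 * (m + n + 1 - 2 * k) * linCoeff (m + 1) n k * Herm (m + n - 2 * k) x := by
  rcases le_or_gt k (m + 1) with hm | hm
  · rcases le_or_gt k n with hn | hn
    · rw [two_mul_mul_herm, show m + 1 + n - 2 * k + 1 = m + n + 2 - 2 * k by omega,
        show m + 1 + n - 2 * k - 1 = m + n - 2 * k by omega,
        Nat.cast_sub (by omega)]
      push_cast
      ring
    · simp [linCoeff, Nat.choose_eq_zero_of_lt hn]
  · simp [linCoeff_eq_zero hm]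

theorem herm_mul_herm (m n : ℕ) (x : ℝ) :
    Herm m x * Herm n x = ∑ k ∈ range (m + 1), linCoeff m n k * Herm (m + n - 2 * k) x := by
  induction m using Nat.twoStepInduction with
  | zero => simp [linCoeff_zero, herm_zero]
  | one =>
    rw [herm_one, two_mul_mul_herm, sum_range_succ, sum_range_one, linCoeff_zero]
    simp [linCoeff, add_comm]
  | more m ih₀ ih₁ =>
    rw [← sum_range_linCoeff_mul_herm_of_lt (N := m + 2) (by omega)] at ih₀
    calc Herm (m + 2) x * Herm n x
        = 2 * x * (Herm (m + 1) x * Herm n x) - 2 * (m + 1) * (Herm m x * Herm n x) := by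
          rw [herm_add_two]; ring
      _ = ∑ k ∈ range (m + 2), linCoeff (m + 1) n k * (2 * x * Herm (m + 1 + n - 2 * k) x)
          - ∑ k ∈ range (m + 2), 2 * (m + 1) * linCoeff m n k * Herm (m + n - 2 * k) x := by
          rw [ih₀, ih₁, mul_sum, mul_sum]
          congr 1 <;> exact sum_congr rfl fun k _ => by ring
      _ = ∑ k ∈ range (m + 3), linCoeff (m + 1) n k * Herm (m + n + 2 - 2 * k) x
          + ∑ k ∈ range (m + 2), (2 * (m + n + 1 - 2 * k) * linCoeff (m + 1) n k
              - 2 * (m + 1) * linCoeff m n k) * Herm (m + n - 2 * k) x := by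
          rw [sum_range_succ _ (m + 2), linCoeff_eq_zero (by omega), zero_mul, add_zero]
          simp only [linCoeff_mul_two_mul_herm, sum_add_distrib, sub_mul, sum_sub_distrib]
          ring
      _ = ∑ k ∈ range (m + 3), linCoeff (m + 2) n k * Herm (m + 2 + n - 2 * k) x := by
          rw [sum_range_succ' _ (m + 2), sum_range_succ' _ (m + 2)]
          simp only [linCoeff_add_two_succ, linCoeff_zero, add_mul, sub_mul, sum_add_distrib,
            sum_sub_distrib, show ∀ k, m + n + 2 - 2 * (k + 1) = m + n - 2 * k by omega,
            show m + 2 + n = m + n + 2 by ring]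
          ring

lemma integrable_pow_mul_exp_neg_sq (j : ℕ) : Integrable fun x : ℝ => x ^ j * exp (-x ^ 2) := by
  simpa using integrable_rpow_mul_exp_neg_mul_sq one_pos (s := (j : ℝ))
    (by linarith [j.cast_nonneg (α := ℝ)])

lemma integral_pow_two_mul_mul_exp_neg_sq (p : ℕ) :
    ∫ x : ℝ, x ^ (2 * p) * exp (-x ^ 2) = Gamma (p + 1 / 2) := by
  have habs : (fun x : ℝ => x ^ (2 * p) * exp (-x ^ 2))
      = fun x => |x| ^ (2 * p) * exp (-|x| ^ 2) := by
    ext x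
    rw [pow_mul, pow_mul, sq_abs]
  rw [habs, integral_comp_abs (f := fun y => y ^ (2 * p) * exp (-y ^ 2))]
  have hrpow : ∫ x in Set.Ioi (0 : ℝ), x ^ (2 * p) * exp (-x ^ 2)
      = ∫ x in Set.Ioi (0 : ℝ), x ^ ((2 * p : ℕ) : ℝ) * exp (-x ^ (2 : ℝ)) := by
    refine setIntegral_congr_fun measurableSet_Ioi fun x _ => ?_
    simp only [rpow_natCast, rpow_two]
  rw [hrpow, integral_rpow_mul_exp_neg_rpow two_pos (by linarith [(2 * p).cast_nonneg (α := ℝ)])]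
  push_cast
  ring_nf

lemma pow_mul_exp_neg_sq_mul_herm (p r : ℕ) (x : ℝ) :
    x ^ p * exp (-x ^ 2) * Herm r x = ∑ k ∈ range (r / 2 + 1),
      hermCoeff r k * 2 ^ (r - 2 * k) * (x ^ (p + (r - 2 * k)) * exp (-x ^ 2)) := by
  rw [herm_eq_sum_hermCoeff (Nat.lt_succ_self _), mul_sum]
  exact sum_congr rfl fun k _ => by ring

lemma integrable_pow_mul_exp_neg_sq_mul_herm (p r : ℕ) :
    Integrable fun x : ℝ => x ^ p * exp (-x ^ 2) * Herm r x := by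
  simp only [pow_mul_exp_neg_sq_mul_herm p r]
  exact integrable_finsetSum _ fun k _ => (integrable_pow_mul_exp_neg_sq _).const_mul _

lemma integral_pow_two_mul_mul_exp_neg_sq_mul_herm_two_mul (t m : ℕ) :
    ∫ x : ℝ, x ^ (2 * t) * exp (-x ^ 2) * Herm (2 * m) x
      = ∑ j ∈ range (m + 1),
          hermCoeff (2 * m) j * 4 ^ (m - j) * Gamma (t + (m - j : ℕ) + 1 / 2) := by
  simp only [pow_mul_exp_neg_sq_mul_herm (2 * t) (2 * m)]
  rw [integral_finsetSum _ fun k _ => (integrable_pow_mul_exp_neg_sq _).const_mul _,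
    show 2 * m / 2 = m by omega]
  refine sum_congr rfl fun j hj => ?_
  have hjm : j ≤ m := by simp at hj; omega
  rw [integral_const_mul, show 2 * t + (2 * m - 2 * j) = 2 * (t + (m - j)) by omega,
    integral_pow_two_mul_mul_exp_neg_sq, show 2 * m - 2 * j = 2 * (m - j) by omega, pow_mul]
  push_cast
  norm_num

lemma sum_hermCoeff_mul_Gamma (t m : ℕ) :
    ∑ j ∈ range (m + 1), hermCoeff (2 * m) j * 4 ^ (m - j) * Gamma (t + (m - j : ℕ) + 1 / 2)
      = 4 ^ m * Gamma (t + m + 1 / 2) * hyp2F1 m (1 / 2 - m) (1 / 2 - m - t) 1 := by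
  rw [hyp2F1, mul_sum]
  refine sum_congr rfl fun j hj => ?_
  obtain ⟨d, rfl⟩ := Nat.exists_eq_add_of_le (show j ≤ m by simp at hj; omega)
  have ha : (0 : ℝ) < t + d + 1 / 2 := by positivity
  have hduplication : 4 ^ j * poch (-(j + d : ℕ)) j * poch (1 / 2 - (j + d : ℕ)) j
      = (2 * (j + d)).descFactorial (2 * j) := by
    have := poch_two_mul (-(2 * (j + d) : ℕ)) j
    rw [poch_neg_natCast_s13, pow_mul, neg_one_sq, one_pow, one_mul] at this
    rw [this]
    push_cast
    ring_nf
  have hGamma :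
      Gamma (t + (j + d : ℕ) + 1 / 2) = poch (t + d + 1 / 2) j * Gamma (t + d + 1 / 2) := by
    rw [← Gamma_add_natCast_eq_poch_mul _ ha]
    push_cast
    ring_nf
  have hreflect : poch (1 / 2 - (j + d : ℕ) - t) j = (-1) ^ j * poch (t + d + 1 / 2) j := by
    rw [← poch_one_sub_sub]
    push_cast
    ring_nf
  have hpoch : poch (t + d + 1 / 2) j ≠ 0 := by
    rw [poch_eq_eval_ascPochhammer]
    exact (ascPochhammer_pos j _ ha).ne'
  have hsign : ((-1 : ℝ) ^ j) ^ 2 = 1 := by rw [← pow_mul, pow_mul', neg_one_sq, one_pow]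
  rw [Nat.add_sub_cancel_left, hGamma, hreflect, hermCoeff, ← hduplication]
  generalize poch (-((j + d : ℕ) : ℝ)) j = P
  generalize poch (1 / 2 - ((j + d : ℕ) : ℝ)) j = Q
  generalize poch (t + d + 1 / 2) j = R at hpoch
  field_simp
  linear_combination 4 ^ j * P * Q * 4 ^ d * hsign

lemma integral_pow_mul_exp_neg_sq_mul_herm_sq_of_odd {s : ℕ} (hs : Odd s) (n : ℕ) :
    ∫ x : ℝ, x ^ s * exp (-x ^ 2) * Herm n x ^ 2 = 0 := by
  have hodd (x : ℝ) : (-x) ^ s * exp (-(-x) ^ 2) * Herm n (-x) ^ 2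
      = -(x ^ s * exp (-x ^ 2) * Herm n x ^ 2) := by
    rw [hs.neg_pow, neg_sq, herm_neg, mul_pow, ← pow_mul, pow_mul', neg_one_sq, one_pow]
    ring
  have := integral_neg_eq_self (fun x : ℝ => x ^ s * exp (-x ^ 2) * Herm n x ^ 2) volume
  simp only [hodd, integral_neg] at this
  linarith

lemma integral_pow_two_mul_mul_exp_neg_sq_mul_herm_sq (t n : ℕ) :
    ∫ x : ℝ, x ^ (2 * t) * exp (-x ^ 2) * Herm n x ^ 2 = ∑ k ∈ range (n + 1),
      linCoeff n n k * ∫ x : ℝ, x ^ (2 * t) * exp (-x ^ 2) * Herm (2 * (n - k)) x := by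
  have hlin (x : ℝ) : x ^ (2 * t) * exp (-x ^ 2) * Herm n x ^ 2 = ∑ k ∈ range (n + 1),
      linCoeff n n k * (x ^ (2 * t) * exp (-x ^ 2) * Herm (2 * (n - k)) x) := by
    rw [sq (Herm n x), herm_mul_herm, mul_sum]
    exact sum_congr rfl fun k _ => by rw [show n + n - 2 * k = 2 * (n - k) by omega]; ring
  simp only [hlin]
  rw [integral_finsetSum _ fun k _ => (integrable_pow_mul_exp_neg_sq_mul_herm _ _).const_mul _]
  exact sum_congr rfl fun k _ => integral_const_mul _ _

/-- power moment of the Hermite Rakhmanov density. -/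
theorem hermite_power_moment (n s : ℕ) :
    (Even s →
      ∫ x : ℝ, x ^ s * Real.exp (-x ^ 2) * (Herm n x) ^ 2 =
        (2 : ℝ) ^ (2 * n) *
          ∑ k ∈ Finset.range (n + 1),
            (n.choose k : ℝ) ^ 2 * (k.factorial : ℝ) * (2 : ℝ)⁻¹ ^ k *
              Real.Gamma (1 / 2 - (k : ℝ) + (n : ℝ) + (s : ℝ) / 2) *
              hyp2F1 (n - k) (1 / 2 + (k : ℝ) - (n : ℝ))
                (1 / 2 + (k : ℝ) - (n : ℝ) - (s : ℝ) / 2) 1) ∧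
    (Odd s → ∫ x : ℝ, x ^ s * Real.exp (-x ^ 2) * (Herm n x) ^ 2 = 0) := by
  refine ⟨fun ⟨t, hst⟩ => ?_, fun hs => integral_pow_mul_exp_neg_sq_mul_herm_sq_of_odd hs n⟩
  rw [hst, ← two_mul, integral_pow_two_mul_mul_exp_neg_sq_mul_herm_sq, mul_sum]
  refine sum_congr rfl fun k hk => ?_
  obtain ⟨m, rfl⟩ := Nat.exists_eq_add_of_le (show k ≤ n by simp at hk; omega)
  rw [integral_pow_two_mul_mul_exp_neg_sq_mul_herm_two_mul, sum_hermCoeff_mul_Gamma,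
    Nat.add_sub_cancel_left, linCoeff]
  have h4 : (2 : ℝ) ^ k * 4 ^ m = 2 ^ (2 * (k + m)) * 2⁻¹ ^ k := by
    rw [show 2 * (k + m) = k + k + 2 * m by ring, pow_add, pow_add, pow_mul, inv_pow]
    field_simp
    norm_num
  push_cast
  rw [show 1 / 2 - (k : ℝ) + (k + m) + (2 * t : ℝ) / 2 = t + m + 1 / 2 by ring,
    show 1 / 2 + (k : ℝ) - (k + m) = 1 / 2 - m by ring,
    show 1 / 2 - (m : ℝ) - (2 * t : ℝ) / 2 = 1 / 2 - m - t by ring]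
  linear_combination (k.factorial : ℝ) * (k + m).choose k ^ 2 * Gamma (t + m + 1 / 2)
    * hyp2F1 m (1 / 2 - m) (1 / 2 - m - t) 1 * h4
end
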